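/- Assume each ν_x has no atoms and the law of p₀(X) has no atoms. Then the random variable H(F(Y|X)) is uniformly distributed on [0,1]: the law of ω ↦ H(F(Y(ω)|X(ω))) equals Lebesgue measure restricted to [0,1]. (This is the null distribution of the proposed residuals under a correctly specified model.) -/

import Mathlib

/-!
Conditionally on `X = x`, the CDF `F(·|x)` jumps from `0` to `p₀(x)` at the origin and is
continuous afterwards, so `F(Y|X) ≤ t` has conditional probability `t` when `p₀(x) ≤ t` and `0`
otherwise. Integrating over `X`, the CDF of `V = F(Y|X)` is `t ↦ t · ℙ(p₀(X) ≤ t) = H(t)` on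
`[0,1]`, and it is continuous because `p₀(X)` has no atoms. Hence `H(V)` is the continuous CDF
of `V` evaluated at `V`, which is uniform by the probability integral transform.
-/

open MeasureTheory ProbabilityTheory Set
open scoped ENNReal ProbabilityTheory
open Filter Topology Function

namespace ProbabilityTheory

section CDF

variable {μ : Measure ℝ} [IsProbabilityMeasure μ]

lemma measure_singleton_eq_ofReal_cdf_sub_leftLim (a : ℝ) :
    μ {a} = ENNReal.ofReal (cdf μ a - leftLim (cdf μ) a) := by
  conv_lhs => rw [← measure_cdf μ]
  exact (cdf μ).measure_singleton a

lemma continuous_cdf_iff_nullSingletonClass : Continuous (cdf μ) ↔ NullSingletonClass μ := by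
  have hsingleton (a : ℝ) : μ {a} = 0 ↔ leftLim (cdf μ) a = cdf μ a := by
    rw [measure_singleton_eq_ofReal_cdf_sub_leftLim, ENNReal.ofReal_eq_zero, sub_nonpos]
    exact ⟨fun h => le_antisymm ((monotone_cdf μ).leftLim_le le_rfl) h, ge_of_eq⟩
  rw [continuous_iff_continuousAt]
  simp only [(monotone_cdf μ).continuousAt_iff_leftLim_eq_rightLim, (cdf μ).rightLim_eq,
    ← hsingleton]
  exact ⟨fun h => ⟨h⟩, fun h => h.measure_singleton⟩

/-- The sublevel set `{cdf μ ≤ t}` is `Iic s` for its supremum `s`: right continuity gives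
`t ≤ cdf μ s`, and `cdf μ s ≤ t` because either `s` is an atom or the jump at `s` vanishes. -/
lemma measure_setOf_cdf_le {t : ℝ} (ht0 : 0 ≤ t) (ht1 : t < 1)
    (hatom : ∀ a, μ {a} ≠ 0 → cdf μ a ≤ t) :
    μ {y | cdf μ y ≤ t} = ENNReal.ofReal t := by
  set S := {y | cdf μ y ≤ t}
  rcases S.eq_empty_or_nonempty with hS | hS
  · have ht : t ≤ 0 := ge_of_tendsto' (tendsto_cdf_atBot μ) fun y =>
      (not_le.1 fun hy => hS.subset hy).le
    rw [hS, measure_empty, le_antisymm ht ht0, ENNReal.ofReal_zero]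
  obtain ⟨y₀, hy₀⟩ := eventually_atTop.1 ((tendsto_cdf_atTop μ).eventually (lt_mem_nhds ht1))
  have hbdd : BddAbove S := ⟨y₀, fun y hy => not_lt.1 fun h => (hy₀ y h.le).not_ge hy⟩
  set s := sSup S
  have hle : cdf μ s ≤ t := by
    by_cases hs : μ {s} = 0
    · have hleft : leftLim (cdf μ) s ≤ t := by
        refine le_of_tendsto ((monotone_cdf μ).tendsto_leftLim s) ?_
        filter_upwards [self_mem_nhdsWithin] with y hy
        obtain ⟨z, hz, hyz⟩ := exists_lt_of_lt_csSup hS hy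
        exact (monotone_cdf μ hyz.le).trans hz
      rw [measure_singleton_eq_ofReal_cdf_sub_leftLim, ENNReal.ofReal_eq_zero, sub_nonpos] at hs
      exact hs.trans hleft
    · exact hatom s hs
  have hge : t ≤ cdf μ s := by
    refine ge_of_tendsto ((cdf μ).right_continuous s |>.mono Ioi_subset_Ici_self) ?_
    filter_upwards [self_mem_nhdsWithin] with y hy
    exact (not_le.1 fun h => (le_csSup hbdd h).not_gt hy).le
  have hSeq : S = Iic s :=
    Subset.antisymm (fun y hy => le_csSup hbdd hy) fun y hy => (monotone_cdf μ hy).trans hle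
  rw [hSeq, ← ofReal_cdf, le_antisymm hle hge]

theorem map_cdf_eq_volume_restrict_Icc [NullSingletonClass μ] :
    μ.map (cdf μ) = volume.restrict (Icc 0 1) := by
  have hmeas : Measurable (cdf μ) := (monotone_cdf μ).measurable
  refine Measure.ext_of_Iic _ _ fun u => ?_
  rw [Measure.map_apply hmeas measurableSet_Iic, Measure.restrict_apply measurableSet_Iic]
  rcases lt_or_ge u 0 with hu0 | hu0
  · have hpre : cdf μ ⁻¹' Iic u = ∅ :=
      eq_empty_of_forall_notMem fun y hy => hu0.not_ge ((cdf_nonneg μ y).trans hy)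
    have hinter : Iic u ∩ Icc 0 1 = ∅ :=
      eq_empty_of_forall_notMem fun y hy => hu0.not_ge (hy.2.1.trans hy.1)
    rw [hpre, hinter, measure_empty, measure_empty]
  rcases lt_or_ge u 1 with hu1 | hu1
  · have hinter : Iic u ∩ Icc 0 1 = Icc 0 u := by
      ext y
      simp only [mem_inter_iff, mem_Iic, mem_Icc]
      constructor
      · rintro ⟨hyu, hy0, -⟩
        exact ⟨hy0, hyu⟩
      · rintro ⟨hy0, hyu⟩
        exact ⟨hyu, hy0, hyu.trans hu1.le⟩
    rw [hinter, Real.volume_Icc, sub_zero]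
    exact measure_setOf_cdf_le hu0 hu1 fun a ha => absurd (measure_singleton a) ha
  · have hpre : cdf μ ⁻¹' Iic u = univ :=
      eq_univ_of_forall fun y => (cdf_le_one μ y).trans hu1
    rw [hpre, inter_eq_self_of_subset_right fun y hy => hy.2.trans hu1, Real.volume_Icc,
      measure_univ, sub_zero, ENNReal.ofReal_one]

end CDF

lemma measure_setOf_cdf_le_of_eq_smul_dirac_add {ρ ν : Measure ℝ} [IsProbabilityMeasure ρ]
    [NullSingletonClass ν] {p t : ℝ} (hp : 0 ≤ p)
    (hρ : ρ = ENNReal.ofReal p • Measure.dirac 0 + ENNReal.ofReal (1 - p) • ν)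
    (hν0 : ν (Iic 0) = 0) (ht : t < 1) :
    ρ {y | cdf ρ y ≤ t} = (Iic t).indicator (fun _ => ENNReal.ofReal t) p := by
  have hIic_zero : ρ (Iic 0) = ENNReal.ofReal p := by
    rw [hρ]
    simp [hν0]
  have hcdf_zero : cdf ρ 0 = p := by
    rw [cdf_eq_real, measureReal_def, hIic_zero, ENNReal.toReal_ofReal hp]
  by_cases hpt : p ≤ t
  · rw [indicator_of_mem (mem_Iic.2 hpt)]
    refine measure_setOf_cdf_le (hp.trans hpt) ht fun a ha => ?_
    obtain rfl : a = 0 := by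
      by_contra ha0
      apply ha
      rw [hρ]
      simp [ha0]
    exact hcdf_zero ▸ hpt
  · rw [indicator_of_notMem (mt mem_Iic.1 hpt)]
    have hsub : {y | cdf ρ y ≤ t} ⊆ Iio 0 := fun y hy =>
      not_le.1 fun hy0 => hpt (hcdf_zero ▸ (monotone_cdf ρ hy0).trans hy)
    refine measure_mono_null hsub ?_
    rw [hρ]
    simp [measure_mono_null Iio_subset_Iic_self hν0]

lemma measurable_cdf_kernel {α : Type*} [MeasurableSpace α] (κ : Kernel α ℝ)
    [IsMarkovKernel κ] :
    Measurable fun q : α × ℝ => cdf (κ q.1) q.2 := by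
  simp_rw [cdf_eq_real, measureReal_def]
  refine Measurable.ennreal_toReal ?_
  exact Kernel.measurable_kernel_prodMk_left (κ := Kernel.comap κ Prod.fst measurable_fst)
    (measurableSet_le measurable_snd measurable_fst.snd)

section SemicontinuousRegression

variable {α Ω : Type*} [MeasurableSpace α] [MeasurableSpace Ω] {P : Measure Ω}
  [IsProbabilityMeasure P] {X : Ω → α} {Y : Ω → ℝ} {κ : Kernel α ℝ} [IsMarkovKernel κ]

lemma cdf_map_eq_one_of_forall_le {Z : Ω → ℝ} (hZ : Measurable Z) {t : ℝ}
    (h : ∀ ω, Z ω ≤ t) : cdf (P.map Z) t = 1 := by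
  have := Measure.isProbabilityMeasure_map (μ := P) hZ.aemeasurable
  rw [cdf_eq_real, map_measureReal_apply hZ measurableSet_Iic,
    show Z ⁻¹' Iic t = univ from eq_univ_of_forall h, probReal_univ]

lemma measure_setOf_cdf_kernel_le (hX : Measurable X) (hY : Measurable Y)
    (hjoint : P.map (fun ω => (X ω, Y ω)) = P.map X ⊗ₘ κ) {p₀ : α → ℝ} (hp₀ : Measurable p₀)
    {t : ℝ} (hκt : ∀ x, κ x {y | cdf (κ x) y ≤ t}
      = (Iic t).indicator (fun _ => ENNReal.ofReal t) (p₀ x)) :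
    P {ω | cdf (κ (X ω)) (Y ω) ≤ t} = ENNReal.ofReal t * P {ω | p₀ (X ω) ≤ t} := by
  have hs : MeasurableSet {q : α × ℝ | cdf (κ q.1) q.2 ≤ t} :=
    measurable_cdf_kernel κ measurableSet_Iic
  calc P {ω | cdf (κ (X ω)) (Y ω) ≤ t}
      = P.map (fun ω => (X ω, Y ω)) {q | cdf (κ q.1) q.2 ≤ t} :=
        (Measure.map_apply (hX.prodMk hY) hs).symm
    _ = ∫⁻ x, κ x {y | cdf (κ x) y ≤ t} ∂(P.map X) := by
        rw [hjoint, Measure.compProd_apply hs]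
        rfl
    _ = ∫⁻ x, (Iic t).indicator (fun _ => ENNReal.ofReal t) (p₀ x) ∂(P.map X) :=
        lintegral_congr hκt
    _ = ENNReal.ofReal t * P {ω | p₀ (X ω) ≤ t} := by
        rw [lintegral_indicator_const_comp hp₀ measurableSet_Iic,
          Measure.map_apply hX (hp₀ measurableSet_Iic)]
        rfl

lemma cdf_map_cdf_kernel (hX : Measurable X) (hY : Measurable Y)
    (hjoint : P.map (fun ω => (X ω, Y ω)) = P.map X ⊗ₘ κ) {p₀ : α → ℝ} (hp₀ : Measurable p₀)
    (hp₀mem : ∀ x, p₀ x ∈ Icc 0 1) {ν : α → Measure ℝ} (hν0 : ∀ x, ν x (Iic 0) = 0)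
    (hνatom : ∀ x, NullSingletonClass (ν x))
    (hκ : ∀ x, κ x = ENNReal.ofReal (p₀ x) • Measure.dirac 0 + ENNReal.ofReal (1 - p₀ x) • ν x)
    (t : ℝ) :
    cdf (P.map fun ω => cdf (κ (X ω)) (Y ω)) t
      = min (max t 0) 1 * cdf (P.map fun ω => p₀ (X ω)) t := by
  have hV : Measurable fun ω => cdf (κ (X ω)) (Y ω) :=
    (measurable_cdf_kernel κ).comp (hX.prodMk hY)
  have hp₀X : Measurable fun ω => p₀ (X ω) := hp₀.comp hX
  rcases lt_or_ge t 1 with ht | ht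
  · have hκt (x : α) :=
      haveI := hνatom x
      measure_setOf_cdf_le_of_eq_smul_dirac_add (hp₀mem x).1 (hκ x) (hν0 x) ht
    have := Measure.isProbabilityMeasure_map (μ := P) hV.aemeasurable
    have : IsProbabilityMeasure (P.map fun ω => p₀ (X ω)) :=
      Measure.isProbabilityMeasure_map hp₀X.aemeasurable
    rw [cdf_eq_real, cdf_eq_real, map_measureReal_apply hV measurableSet_Iic,
      map_measureReal_apply hp₀X measurableSet_Iic, measureReal_def, measureReal_def]
    simp only [preimage, mem_Iic]
    rw [measure_setOf_cdf_kernel_le hX hY hjoint hp₀ hκt, ENNReal.toReal_mul,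
      ENNReal.toReal_ofReal', min_eq_left (max_le ht.le zero_le_one)]
  · rw [cdf_map_eq_one_of_forall_le hV fun ω => (cdf_le_one _ _).trans ht,
      cdf_map_eq_one_of_forall_le hp₀X fun ω => (hp₀mem _).2.trans ht,
      max_eq_left (zero_le_one.trans ht), min_eq_right ht, mul_one]

end SemicontinuousRegression

end ProbabilityTheory

theorem stmt5_general {d : ℕ} {Ω : Type*} [MeasurableSpace Ω] (P : Measure Ω)
    [IsProbabilityMeasure P]
    (X : Ω → (Fin d → ℝ)) (hX : Measurable X)
    (Y : Ω → ℝ) (hY : Measurable Y)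
    (μX : Measure (Fin d → ℝ)) (hμX : μX = P.map X)
    (p₀ : (Fin d → ℝ) → ℝ) (hp₀ : Measurable p₀)
    (hp₀mem : ∀ x, p₀ x ∈ Set.Ioo (0 : ℝ) 1)
    (ν : (Fin d → ℝ) → Measure ℝ)
    (hν0 : ∀ x, ν x (Set.Iic 0) = 0) (hνatom : ∀ x, NoAtoms (ν x))
    (κ : Kernel (Fin d → ℝ) ℝ) [IsMarkovKernel κ]
    (hκ : ∀ x, κ x = ENNReal.ofReal (p₀ x) • Measure.dirac 0
        + ENNReal.ofReal (1 - p₀ x) • ν x)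
    (F : ℝ → (Fin d → ℝ) → ℝ) (hF : ∀ y x, F y x = (κ x (Set.Iic y)).toReal)
    (hjoint : P.map (fun ω => (X ω, Y ω)) = μX ⊗ₘ κ)
    (hp₀X : NoAtoms (P.map (fun ω => p₀ (X ω))))
    (H : ℝ → ℝ) (hH : ∀ s ∈ Set.Icc (0 : ℝ) 1,
      H s = s * (P {ω | p₀ (X ω) ≤ s}).toReal) :
    P.map (fun ω => H (F (Y ω) (X ω))) = volume.restrict (Set.Icc (0 : ℝ) 1) := by
  subst hμX
  set V : Ω → ℝ := fun ω => cdf (κ (X ω)) (Y ω)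
  have hV : Measurable V := (measurable_cdf_kernel κ).comp (hX.prodMk hY)
  have hcdfV := cdf_map_cdf_kernel hX hY hjoint hp₀ (fun x => Ioo_subset_Icc_self (hp₀mem x))
    hν0 hνatom hκ
  have := Measure.isProbabilityMeasure_map (μ := P) hV.aemeasurable
  have hp₀X_meas : Measurable fun ω => p₀ (X ω) := hp₀.comp hX
  have : IsProbabilityMeasure (P.map fun ω => p₀ (X ω)) :=
    Measure.isProbabilityMeasure_map hp₀X_meas.aemeasurable
  have : NullSingletonClass (P.map V) := by
    have := continuous_cdf_iff_nullSingletonClass.2 hp₀X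
    rw [← continuous_cdf_iff_nullSingletonClass, funext hcdfV]
    fun_prop
  have hHV : (fun ω => H (F (Y ω) (X ω))) = cdf (P.map V) ∘ V := by
    funext ω
    have hVω : V ω ∈ Icc 0 1 := ⟨cdf_nonneg _ _, cdf_le_one _ _⟩
    rw [hF, ← measureReal_def, ← cdf_eq_real, comp_apply, hcdfV, hH _ hVω, cdf_eq_real,
      map_measureReal_apply hp₀X_meas measurableSet_Iic, max_eq_left hVω.1,
      min_eq_left hVω.2]
    rfl
  rw [hHV, ← Measure.map_map (monotone_cdf _).measurable hV]
  exact map_cdf_eq_volume_restrict_Icc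

/-- In the semicontinuous regression setup, if each `ν_x` has no atoms and
the law of `p₀(X)` has no atoms, then with `H(s) = s·Pr(p₀(X) ≤ s)`, the random variable
`H(F(Y|X))` is uniformly distributed on `[0,1]`: its law is Lebesgue measure restricted
to `[0,1]`.  (Null distribution of the proposed residuals under a correct model.) -/
theorem stmt5 {d : ℕ} {Ω : Type*} [MeasurableSpace Ω] (P : Measure Ω)
    [IsProbabilityMeasure P]
    (X : Ω → (Fin d → ℝ)) (hX : Measurable X)
    (Y : Ω → ℝ) (hY : Measurable Y)
    (μX : Measure (Fin d → ℝ)) (hμX : μX = P.map X)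
    (p₀ : (Fin d → ℝ) → ℝ) (hp₀ : Measurable p₀)
    (hp₀mem : ∀ x, p₀ x ∈ Set.Ioo (0 : ℝ) 1)
    (ν : (Fin d → ℝ) → Measure ℝ) (hν : ∀ x, IsProbabilityMeasure (ν x))
    (hν0 : ∀ x, ν x (Set.Iic 0) = 0) (hνatom : ∀ x, NoAtoms (ν x))
    (κ : Kernel (Fin d → ℝ) ℝ) [IsMarkovKernel κ]
    (hκ : ∀ x, κ x = ENNReal.ofReal (p₀ x) • Measure.dirac 0
        + ENNReal.ofReal (1 - p₀ x) • ν x)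
    (F : ℝ → (Fin d → ℝ) → ℝ) (hF : ∀ y x, F y x = (κ x (Set.Iic y)).toReal)
    (hjoint : P.map (fun ω => (X ω, Y ω)) = μX ⊗ₘ κ)
    (hp₀X : NoAtoms (P.map (fun ω => p₀ (X ω))))
    (H : ℝ → ℝ) (hH : ∀ s ∈ Set.Icc (0 : ℝ) 1,
      H s = s * (P {ω | p₀ (X ω) ≤ s}).toReal) :
    P.map (fun ω => H (F (Y ω) (X ω))) = volume.restrict (Set.Icc (0 : ℝ) 1) :=
  stmt5_general P X hX Y hY μX hμX p₀ hp₀ hp₀mem ν hν0 hνatom κ hκ F hF hjoint hp₀X H hH
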